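/- Let z_1,...,z_r be distinct complex numbers with |z_j| ≤ 1 and Δ := min_{j≠k} |z_j - z_k|. Then the Frobenius norm of the inverse Vandermonde matrix satisfies ‖V^{-1}‖_F ≤ sqrt(r · C(2(r-1), r-1)) / Δ^{r-1}, and hence the operator norm ‖V^{-1}‖ obeys the same bound. -/

import Mathlib

/-! The `k`-th column of `V⁻¹` holds the coefficients of the Lagrange basis polynomial
`ℓ_k = w_k ∏_{j ≠ k} (X - z_j)`, whose weight satisfies `|w_k| = ∏_{j ≠ k} |z_k - z_j|⁻¹ ≤ Δ^{-(r-1)}`.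
By Vieta, the `m`-th coefficient of `∏_{j ≠ k} (X - z_j)` is a sum of `C(r-1, m)` products of
nodes of modulus at most one. Squaring and summing the resulting entrywise bound uses
`∑ C(n, m)² = C(2n, n)`, and the operator norm is at most the Frobenius norm by Cauchy–Schwarz. -/

open Matrix

/-- The spectral (operator) norm of a square complex matrix. -/
noncomputable def opNorm {n : ℕ} (M : Matrix (Fin n) (Fin n) ℂ) : ℝ :=
  ‖Matrix.toEuclideanCLM (𝕜 := ℂ) M‖

/-- The Frobenius norm of a square complex matrix. -/
noncomputable def frobNorm {n : ℕ} (M : Matrix (Fin n) (Fin n) ℂ) : ℝ :=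
  Real.sqrt (∑ j, ∑ k, ‖M j k‖ ^ 2)

open Polynomial Finset

namespace Lagrange

theorem norm_coeff_nodal_le {ι R : Type*} [NormedCommRing R] [NormOneClass R]
    (s : Finset ι) (v : ι → R) (hv : ∀ i ∈ s, ‖v i‖ ≤ 1) (k : ℕ) :
    ‖(nodal s v).coeff k‖ ≤ (#s).choose k := by
  rcases le_or_gt k #s with hk | hk
  · have hnodal : nodal s v = ∏ i ∈ s, (X + C (-v i)) := by
      simp only [nodal_eq, map_neg, sub_eq_add_neg]
    rw [hnodal, Finset.prod_X_add_C_coeff _ _ hk, ← Nat.choose_symm hk,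
      ← Finset.card_powersetCard]
    calc _ ≤ ∑ _t ∈ s.powersetCard (#s - k), (1 : ℝ) :=
          norm_sum_le_of_le _ fun t ht => (Finset.norm_prod_le _ _).trans <|
            Finset.prod_le_one (fun _ _ => norm_nonneg _) fun i hi => by
              rw [norm_neg]
              exact hv i ((Finset.mem_powersetCard.mp ht).1 hi)
      _ = _ := by simp
  · have := NormOneClass.nontrivial (G := R)
    rw [coeff_eq_zero_of_natDegree_lt (by rwa [natDegree_nodal]), Nat.choose_eq_zero_of_lt hk]
    simp

variable {ι F : Type*} [NormedField F] [DecidableEq ι] {s : Finset ι} {v : ι → F} {i : ι}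
  {Δ : ℝ}

theorem norm_nodalWeight_le (hΔ : 0 < Δ) (hsep : ∀ j ∈ s, j ≠ i → Δ ≤ ‖v i - v j‖) :
    ‖nodalWeight s v i‖ ≤ (Δ ^ #(s.erase i))⁻¹ := by
  rw [nodalWeight, norm_prod, ← inv_pow, ← Finset.prod_const]
  refine Finset.prod_le_prod (fun _ _ => norm_nonneg _) fun j hj => ?_
  obtain ⟨hji, hj⟩ := Finset.mem_erase.mp hj
  rw [norm_inv]
  exact inv_anti₀ hΔ (hsep j hj hji)

theorem norm_coeff_basis_le (hi : i ∈ s) (hv : ∀ j ∈ s, ‖v j‖ ≤ 1) (hΔ : 0 < Δ)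
    (hsep : ∀ j ∈ s, j ≠ i → Δ ≤ ‖v i - v j‖) (k : ℕ) :
    ‖(Lagrange.basis s v i).coeff k‖ ≤ (#s - 1).choose k / Δ ^ (#s - 1) := by
  rw [basis_eq_prod_sub_inv_mul_nodal_div hi, ← nodal_erase_eq_nodal_div hi, coeff_C_mul,
    norm_mul, div_eq_inv_mul, ← Finset.card_erase_of_mem hi]
  exact mul_le_mul (norm_nodalWeight_le hΔ hsep)
    (norm_coeff_nodal_le _ _ (fun j hj => hv j (Finset.mem_of_mem_erase hj)) k)
    (norm_nonneg _) (by positivity)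

end Lagrange

namespace Matrix

variable {F : Type*} [Field F] {r : ℕ} {z : Fin r → F}

theorem vandermonde_mul_lagrange_basis_coeff (hz : Function.Injective z) :
    vandermonde z * Matrix.of (fun (m k : Fin r) => (Lagrange.basis univ z k).coeff m) = 1 := by
  ext j k
  have hdeg : (Lagrange.basis univ z k).natDegree < r := by
    rw [Lagrange.natDegree_basis hz.injOn (mem_univ k), card_univ, Fintype.card_fin]
    exact Nat.sub_lt_of_pos_le Nat.one_pos (Nat.one_le_of_lt k.isLt)
  have heval : ∑ m : Fin r, vandermonde z j m * (Lagrange.basis univ z k).coeff m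
      = (Lagrange.basis univ z k).eval (z j) := by
    rw [eval_eq_sum_range' hdeg, ← Fin.sum_univ_eq_sum_range]
    simp only [vandermonde_apply, mul_comm]
  rw [mul_apply, one_apply]
  simp only [of_apply, heval]
  rcases eq_or_ne j k with rfl | hjk
  · simp [Lagrange.eval_basis_self hz.injOn (mem_univ j)]
  · simp [Lagrange.eval_basis_of_ne (Ne.symm hjk) (mem_univ j), hjk]

theorem inv_vandermonde_apply (hz : Function.Injective z) (m k : Fin r) :
    (vandermonde z)⁻¹ m k = (Lagrange.basis univ z k).coeff m := by
  rw [inv_eq_right_inv (vandermonde_mul_lagrange_basis_coeff hz), of_apply]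

end Matrix

theorem opNorm_le_frobNorm {n : ℕ} (M : Matrix (Fin n) (Fin n) ℂ) : opNorm M ≤ frobNorm M := by
  refine ContinuousLinearMap.opNorm_le_bound _ (Real.sqrt_nonneg _) fun x => ?_
  refine (sq_le_sq₀ (norm_nonneg _) (by unfold frobNorm; positivity)).mp ?_
  rw [mul_pow, frobNorm, Real.sq_sqrt (by positivity), EuclideanSpace.norm_sq_eq,
    EuclideanSpace.norm_sq_eq, Finset.sum_mul]
  gcongr with i
  simp only [ofLp_toEuclideanCLM, mulVec, dotProduct]
  calc ‖∑ j, M i j * x j‖ ^ 2 ≤ (∑ j, ‖M i j‖ * ‖x j‖) ^ 2 := by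
        gcongr
        exact norm_sum_le_of_le _ fun j _ => (norm_mul _ _).le
    _ ≤ _ := Finset.sum_mul_sq_le_sq_mul_sq _ _ _

theorem frobNorm_le_of_norm_le {n : ℕ} {M : Matrix (Fin n) (Fin n) ℂ} {a : Fin n → ℝ}
    (h : ∀ j k, ‖M j k‖ ≤ a j) : frobNorm M ≤ Real.sqrt (n * ∑ j, a j ^ 2) := by
  refine Real.sqrt_le_sqrt ?_
  calc ∑ j, ∑ k, ‖M j k‖ ^ 2 ≤ ∑ j : Fin n, ∑ _k : Fin n, a j ^ 2 := by
        gcongr with j _ k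
        exact h j k
    _ = n * ∑ j, a j ^ 2 := by simp [Finset.mul_sum]

theorem sum_fin_choose_sq_le (r : ℕ) :
    ∑ j : Fin r, (((r - 1).choose j : ℝ)) ^ 2 ≤ (2 * (r - 1)).choose (r - 1) := by
  rw [Fin.sum_univ_eq_sum_range (fun j => (((r - 1).choose j : ℝ)) ^ 2)]
  -- an inequality only because `r - 1 + 1 = 1 ≠ r` when `r = 0`
  calc _ ≤ ∑ j ∈ range (r - 1 + 1), (((r - 1).choose j : ℝ)) ^ 2 :=
        sum_le_sum_of_subset_of_nonneg (range_subset_range.mpr (by omega))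
          fun _ _ _ => sq_nonneg _
    _ = _ := by exact_mod_cast Nat.sum_range_choose_sq (r - 1)

theorem vandermonde_inverse_norm_bound (r : ℕ) (z : Fin r → ℂ)
    (hzle : ∀ j, ‖z j‖ ≤ 1)
    (Δ : ℝ) (hΔpos : 0 < Δ)
    (hΔ : ∀ j k, j ≠ k → Δ ≤ ‖z j - z k‖)
    (V : Matrix (Fin r) (Fin r) ℂ)
    (hV : ∀ j k, V j k = z j ^ (k.1)) :
    frobNorm V⁻¹ ≤ Real.sqrt (r * ((2 * (r - 1)).choose (r - 1))) / Δ ^ (r - 1) ∧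
    opNorm V⁻¹ ≤ Real.sqrt (r * ((2 * (r - 1)).choose (r - 1))) / Δ ^ (r - 1) := by
  suffices hF : frobNorm V⁻¹ ≤ Real.sqrt (r * ((2 * (r - 1)).choose (r - 1))) / Δ ^ (r - 1) from
    ⟨hF, (opNorm_le_frobNorm _).trans hF⟩
  have hz : Function.Injective z := fun j k hjk => by
    by_contra hne
    simpa [hjk] using (hΔ j k hne).trans_lt' hΔpos
  have hVz : V = vandermonde z := Matrix.ext fun j k => hV j k
  have hentry (m k : Fin r) : ‖V⁻¹ m k‖ ≤ (r - 1).choose m / Δ ^ (r - 1) := by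
    simpa [hVz, inv_vandermonde_apply hz] using
      Lagrange.norm_coeff_basis_le (mem_univ k) (fun j _ => hzle j) hΔpos
        (fun j _ hjk => hΔ k j hjk.symm) m
  calc frobNorm V⁻¹ ≤ Real.sqrt (r * ∑ m : Fin r, ((r - 1).choose m / Δ ^ (r - 1)) ^ 2) :=
        frobNorm_le_of_norm_le hentry
    _ = Real.sqrt (r * ∑ m : Fin r, (((r - 1).choose m : ℝ)) ^ 2) / Δ ^ (r - 1) := by
        rw [← Real.sqrt_sq (by positivity : (0 : ℝ) ≤ Δ ^ (r - 1)), ← Real.sqrt_div'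
          _ (by positivity), Real.sqrt_sq (by positivity)]
        simp only [div_pow, ← Finset.sum_div, mul_div_assoc]
    _ ≤ _ := by gcongr; exact sum_fin_choose_sq_le r
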